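/- Let X : Ω → ℝ^m and V : Ω → ℝ^t be jointly centered Gaussian with block covariance Σ = [[Σ_xx, Σ_xv],[Σ_xvᵀ, Σ_vv]], Σ_vv positive definite, and let S ⊆ ℝ^t be measurable with P(V ∈ S) > 0. Then the conditional expectation of X given the event {V ∈ S} satisfies E[X | V ∈ S] = Σ_xv Σ_vv⁻¹ E[V | V ∈ S], where E[· | V ∈ S] denotes the expectation under the conditioned measure P(· | V ∈ S). -/

import Mathlib

open MeasureTheory ProbabilityTheory Matrix
open scoped ProbabilityTheory

/-- The standard Gaussian measure on `ℝ^n`. -/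
noncomputable def stdGaussianPi (n : ℕ) : Measure (Fin n → ℝ) :=
  Measure.pi fun _ => gaussianReal 0 1

open scoped Classical in
/-- The multivariate Gaussian measure `N(μ, S)` on `ℝ^n`, defined as the pushforward of the
standard Gaussian under `x ↦ μ + √S x` when `S` is positive semidefinite. -/
noncomputable def multivariateGaussian {n : ℕ} (μ : Fin n → ℝ)
    (S : Matrix (Fin n) (Fin n) ℝ) : Measure (Fin n → ℝ) :=
  if hS : S.PosSemidef then (stdGaussianPi n).map (fun x => μ +
    ((hS.1.eigenvectorUnitary : Matrix (Fin n) (Fin n) ℝ) *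
      diagonal (fun i => Real.sqrt (hS.1.eigenvalues i)) *
      (star hS.1.eigenvectorUnitary : Matrix (Fin n) (Fin n) ℝ)).mulVec x) else 0

/-- The block matrix `[[Sxx, Sxv], [Sxvᵀ, Svv]]` as a matrix on `Fin (m + t)`. -/
noncomputable def blockCov {m t : ℕ} (Sxx : Matrix (Fin m) (Fin m) ℝ)
    (Sxv : Matrix (Fin m) (Fin t) ℝ) (Svv : Matrix (Fin t) (Fin t) ℝ) :
    Matrix (Fin (m + t)) (Fin (m + t)) ℝ :=
  Matrix.reindex finSumFinEquiv finSumFinEquiv (Matrix.fromBlocks Sxx Sxv Sxvᵀ Svv)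

/-!
With `M = Sxv * Svv⁻¹` we have `M Svv = Sxv`, so the residual `X - M V` is uncorrelated with `V`.
The pair `(X - M V, V)` is a linear image of the Gaussian vector `(X, V)`, hence jointly Gaussian,
so the residual is independent of `V`. Its integral over `{V ∈ S}` is therefore `P (V ∈ S)` times
its mean, which is zero, and so `∫_{V ∈ S} X = M ∫_{V ∈ S} V`.
-/

open WithLp

section Regression

variable {Ω ι κ : Type*} [MeasurableSpace Ω] {P : Measure Ω} [Fintype ι] [Fintype κ]

lemma MeasureTheory.Integrable.mulVec {f : Ω → κ → ℝ} (hf : Integrable f P)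
    (M : Matrix ι κ ℝ) : Integrable (fun ω => M *ᵥ f ω) P :=
  M.mulVecLin.toContinuousLinearMap.integrable_comp hf

lemma integral_mulVec {f : Ω → κ → ℝ} (hf : Integrable f P) (M : Matrix ι κ ℝ) :
    ∫ ω, M *ᵥ f ω ∂P = M *ᵥ ∫ ω, f ω ∂P :=
  M.mulVecLin.toContinuousLinearMap.integral_comp_comm hf

lemma ProbabilityTheory.IndepFun.setIntegral_preimage_eq_smul {E β : Type*}
    [NormedAddCommGroup E] [NormedSpace ℝ E] [MeasurableSpace E] [BorelSpace E]
    [SecondCountableTopology E] [MeasurableSpace β] {Y : Ω → E} {V : Ω → β}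
    (hYV : IndepFun Y V P) (hY : AEMeasurable Y P) (hV : Measurable V)
    {S : Set β} (hS : MeasurableSet S) :
    ∫ ω in V ⁻¹' S, Y ω ∂P = P.real (V ⁻¹' S) • ∫ ω, Y ω ∂P :=
  Indep.setIntegral_eq_smul (f := id) hV.comap_le ((IndepFun_iff_Indep _ _ _).mp hYV.symm) hY
    ⟨S, hS, rfl⟩ aestronglyMeasurable_id

variable {X : Ω → ι → ℝ} {V : Ω → κ → ℝ}

lemma ProbabilityTheory.HasGaussianLaw.indepFun_sub_mulVec
    (hXV : HasGaussianLaw (fun ω => (X ω, V ω)) P)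
    (M : Matrix ι κ ℝ)
    (hM : ∀ i j, cov[fun ω => X ω i, fun ω => V ω j; P] =
      ∑ k, M i k * cov[fun ω => V ω k, fun ω => V ω j; P]) :
    IndepFun (fun ω => X ω - M *ᵥ V ω) V P := by
  have := hXV.isProbabilityMeasure
  let L : ((ι → ℝ) × (κ → ℝ)) →L[ℝ] (ι → ℝ) × (κ → ℝ) :=
    (ContinuousLinearMap.fst ℝ _ _ -
      M.mulVecLin.toContinuousLinearMap ∘L ContinuousLinearMap.snd ℝ _ _).prod
      (ContinuousLinearMap.snd ℝ _ _)
  have hX i := (hXV.fst.eval i).memLp_two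
  have hV j := (hXV.snd.eval j).memLp_two
  refine HasGaussianLaw.indepFun_of_covariance_eval (X := fun i ω => (X ω - M *ᵥ V ω) i)
    (Y := fun j ω => V ω j) (hXV.map L) fun i j => ?_
  simp only [Pi.sub_apply, mulVec, dotProduct]
  rw [covariance_fun_sub_left (hX i) (memLp_finsetSum _ fun k _ => (hV k).const_mul _) (hV j),
    covariance_fun_sum_left (fun k => (hV k).const_mul _) (hV j)]
  simp only [covariance_const_mul_left, hM, sub_self]

lemma ProbabilityTheory.HasGaussianLaw.setIntegral_preimage_eq_mulVec
    (hXV : HasGaussianLaw (fun ω => (X ω, V ω)) P) (hV : Measurable V)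
    (h₀ : ∫ ω, (X ω, V ω) ∂P = 0) (M : Matrix ι κ ℝ)
    (hM : ∀ i j, cov[fun ω => X ω i, fun ω => V ω j; P] =
      ∑ k, M i k * cov[fun ω => V ω k, fun ω => V ω j; P])
    {S : Set (κ → ℝ)} (hS : MeasurableSet S) :
    ∫ ω in V ⁻¹' S, X ω ∂P = M *ᵥ ∫ ω in V ⁻¹' S, V ω ∂P := by
  have hXi := hXV.fst.integrable
  have hVi := hXV.snd.integrable
  obtain ⟨hX₀, hV₀⟩ := Prod.mk_eq_zero.mp ((integral_pair hXi hVi).symm.trans h₀)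
  have hres : Integrable (fun ω => X ω - M *ᵥ V ω) P := hXi.sub (hVi.mulVec M)
  have hres₀ : ∫ ω, X ω - M *ᵥ V ω ∂P = 0 := by
    rw [integral_sub hXi (hVi.mulVec M), integral_mulVec hVi, hX₀, hV₀, mulVec_zero, sub_zero]
  have hres_on : ∫ ω in V ⁻¹' S, X ω - M *ᵥ V ω ∂P = 0 := by
    rw [(hXV.indepFun_sub_mulVec M hM).setIntegral_preimage_eq_smul hres.aemeasurable hV hS,
      hres₀, smul_zero]
  calc ∫ ω in V ⁻¹' S, X ω ∂P
      = ∫ ω in V ⁻¹' S, (X ω - M *ᵥ V ω) + M *ᵥ V ω ∂P := by simp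
    _ = M *ᵥ ∫ ω in V ⁻¹' S, V ω ∂P := by
      rw [integral_add hres.restrict (hVi.mulVec M).restrict, hres_on, zero_add,
        integral_mulVec hVi.restrict]

end Regression

section MultivariateGaussian

open scoped MatrixOrder

lemma Matrix.PosSemidef.sqrt_eq_eigenvectorUnitary_mul {n : ℕ} {S : Matrix (Fin n) (Fin n) ℝ}
    (hS : S.PosSemidef) :
    CFC.sqrt S = (hS.1.eigenvectorUnitary : Matrix (Fin n) (Fin n) ℝ) *
      diagonal (fun i => Real.sqrt (hS.1.eigenvalues i)) *
      (star hS.1.eigenvectorUnitary : Matrix (Fin n) (Fin n) ℝ) := by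
  rw [CFC.sqrt_eq_real_sqrt S hS.nonneg, cfcₙ_eq_cfc (hf0 := Real.sqrt_zero), hS.1.cfc_eq,
    IsHermitian.cfc, Unitary.conjStarAlgAut_apply]
  rfl

lemma multivariateGaussian_eq_map_ofLp {n : ℕ} (μ : Fin n → ℝ)
    {S : Matrix (Fin n) (Fin n) ℝ} (hS : S.PosSemidef) :
    _root_.multivariateGaussian μ S =
      (ProbabilityTheory.multivariateGaussian (toLp 2 μ) S).map ofLp := by
  rw [_root_.multivariateGaussian, dif_pos hS, ProbabilityTheory.multivariateGaussian,
    ← map_pi_eq_stdGaussian, Measure.map_map (by fun_prop) (by fun_prop),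
    Measure.map_map (by fun_prop) (by fun_prop), stdGaussianPi]
  congr 1
  ext x i
  simp [hS.sqrt_eq_eigenvectorUnitary_mul, Matrix.mul_assoc]

variable {Ω : Type*} [MeasurableSpace Ω] {P : Measure Ω} {n : ℕ} {W : Ω → Fin n → ℝ}
  {μ : Fin n → ℝ} {S : Matrix (Fin n) (Fin n) ℝ}

lemma posSemidef_of_map_eq_multivariateGaussian [IsProbabilityMeasure P] (hW : AEMeasurable W P)
    (h : P.map W = _root_.multivariateGaussian μ S) : S.PosSemidef := by
  by_contra hS
  rw [_root_.multivariateGaussian, dif_neg hS] at h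
  have := Measure.isProbabilityMeasure_map hW
  exact IsProbabilityMeasure.ne_zero _ h

lemma hasLaw_toLp_of_map_eq_multivariateGaussian (hW : AEMeasurable W P) (hS : S.PosSemidef)
    (h : P.map W = _root_.multivariateGaussian μ S) :
    HasLaw (fun ω => toLp 2 (W ω)) (ProbabilityTheory.multivariateGaussian (toLp 2 μ) S) P where
  map_eq := by
    change P.map (toLp 2 ∘ W) = _
    rw [← AEMeasurable.map_map_of_aemeasurable (by fun_prop) hW, h,
      multivariateGaussian_eq_map_ofLp μ hS, Measure.map_map (by fun_prop) (by fun_prop)]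
    exact Measure.map_id

lemma ProbabilityTheory.HasLaw.covariance_eval_multivariateGaussian {ι : Type*} [Fintype ι]
    [DecidableEq ι] {Z : Ω → EuclideanSpace ℝ ι} {μ : EuclideanSpace ℝ ι} {S : Matrix ι ι ℝ}
    (hZ : HasLaw Z (ProbabilityTheory.multivariateGaussian μ S) P) (hS : S.PosSemidef)
    (a b : ι) : cov[fun ω => Z ω a, fun ω => Z ω b; P] = S a b := by
  rw [hZ.covariance_fun_comp (f := fun x => x a) (g := fun x => x b) (by fun_prop) (by fun_prop),
    ProbabilityTheory.covariance_eval_multivariateGaussian hS]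

end MultivariateGaussian

section Blocks

variable {m t : ℕ}

noncomputable def splitAppend (m t : ℕ) :
    EuclideanSpace ℝ (Fin (m + t)) →L[ℝ] (Fin m → ℝ) × (Fin t → ℝ) :=
  (ContinuousLinearMap.pi fun i => EuclideanSpace.proj (Fin.castAdd t i)).prod
    (ContinuousLinearMap.pi fun j => EuclideanSpace.proj (Fin.natAdd m j))

@[simp]
lemma splitAppend_toLp_append (x : Fin m → ℝ) (v : Fin t → ℝ) :
    splitAppend m t (toLp 2 (Fin.append x v)) = (x, v) := by
  ext <;> simp [splitAppend]

variable (Sxx : Matrix (Fin m) (Fin m) ℝ) (Sxv : Matrix (Fin m) (Fin t) ℝ)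
  (Svv : Matrix (Fin t) (Fin t) ℝ)

@[simp]
lemma blockCov_castAdd_natAdd (i : Fin m) (j : Fin t) :
    blockCov Sxx Sxv Svv (Fin.castAdd t i) (Fin.natAdd m j) = Sxv i j := by
  simp [blockCov]

@[simp]
lemma blockCov_natAdd_natAdd (j k : Fin t) :
    blockCov Sxx Sxv Svv (Fin.natAdd m j) (Fin.natAdd m k) = Svv j k := by
  simp [blockCov]

end Blocks

theorem cond_mean_eq_general {Ω : Type*} [MeasurableSpace Ω] {m t : ℕ}
    (P : Measure Ω) [IsProbabilityMeasure P]
    (X : Ω → (Fin m → ℝ)) (V : Ω → (Fin t → ℝ))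
    (hX : Measurable X) (hV : Measurable V)
    (Sxx : Matrix (Fin m) (Fin m) ℝ) (Sxv : Matrix (Fin m) (Fin t) ℝ)
    (Svv : Matrix (Fin t) (Fin t) ℝ) (hvv : Svv.PosDef)
    (hjoint : P.map (fun ω => Fin.append (X ω) (V ω)) =
      _root_.multivariateGaussian 0 (blockCov Sxx Sxv Svv))
    (S : Set (Fin t → ℝ)) (hS : MeasurableSet S) :
    (∫ ω, X ω ∂(P[|V ⁻¹' S])) = (Sxv * Svv⁻¹).mulVec (∫ ω, V ω ∂(P[|V ⁻¹' S])) := by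
  have hW : AEMeasurable (fun ω => Fin.append (X ω) (V ω)) P := by fun_prop
  have hpsd := posSemidef_of_map_eq_multivariateGaussian hW hjoint
  have hZ := hasLaw_toLp_of_map_eq_multivariateGaussian hW hpsd hjoint
  have hXV : HasGaussianLaw (fun ω => (X ω, V ω)) P := by
    simpa [Function.comp_def] using hZ.hasGaussianLaw.map (splitAppend m t)
  have h₀ : ∫ ω, (X ω, V ω) ∂P = 0 := by
    simp_rw [← splitAppend_toLp_append]
    rw [(splitAppend m t).integral_comp_comm hZ.hasGaussianLaw.integrable, hZ.integral_eq,
      integral_id_multivariateGaussian]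
    simp
  have hM i j : cov[fun ω => X ω i, fun ω => V ω j; P] =
      ∑ k, (Sxv * Svv⁻¹) i k * cov[fun ω => V ω k, fun ω => V ω j; P] := by
    have h1 := hZ.covariance_eval_multivariateGaussian hpsd (Fin.castAdd t i) (Fin.natAdd m j)
    have h2 k := hZ.covariance_eval_multivariateGaussian hpsd (Fin.natAdd m k) (Fin.natAdd m j)
    simp only [Fin.append_left, Fin.append_right, blockCov_castAdd_natAdd,
      blockCov_natAdd_natAdd] at h1 h2
    simp only [h1, h2, ← Matrix.mul_apply,
      Matrix.nonsing_inv_mul_cancel_right _ _ ((isUnit_iff_isUnit_det _).mp hvv.isUnit)]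
  rw [ProbabilityTheory.cond, integral_smul_measure, integral_smul_measure,
    hXV.setIntegral_preimage_eq_mulVec hV h₀ _ hM hS, mulVec_smul]

/-- Mean identity: `E[X | V ∈ S] = Sxv Svv⁻¹ E[V | V ∈ S]`. -/
theorem cond_mean_eq {Ω : Type*} [MeasurableSpace Ω] {m t : ℕ}
    (P : Measure Ω) [IsProbabilityMeasure P]
    (X : Ω → (Fin m → ℝ)) (V : Ω → (Fin t → ℝ))
    (hX : Measurable X) (hV : Measurable V)
    (Sxx : Matrix (Fin m) (Fin m) ℝ) (Sxv : Matrix (Fin m) (Fin t) ℝ)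
    (Svv : Matrix (Fin t) (Fin t) ℝ) (hvv : Svv.PosDef)
    (hjoint : P.map (fun ω => Fin.append (X ω) (V ω)) =
      _root_.multivariateGaussian 0 (blockCov Sxx Sxv Svv))
    (S : Set (Fin t → ℝ)) (hS : MeasurableSet S) (hpos : 0 < P (V ⁻¹' S)) :
    (∫ ω, X ω ∂(P[|V ⁻¹' S])) = (Sxv * Svv⁻¹).mulVec (∫ ω, V ω ∂(P[|V ⁻¹' S])) :=
  cond_mean_eq_general P X V hX hV Sxx Sxv Svv hvv hjoint S hS
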